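/- If (b, c) ∈ (0,∞)^2 is a critical point of A2, i.e. both partial derivatives of A2 vanish at (b, c), then b = c. -/

import Mathlib

/-- Numerator polynomial of LeBrun's functional `A` on `CP² # 2 CP²-bar`. -/
noncomputable def N2 (b c : ℝ) : ℝ :=
  3 + 28*c + 96*c^2 + 168*c^3 + 164*c^4 + 80*c^5 + 16*c^6
  + 16*b^6*(1+c)^4
  + 16*b^5*(5 + 24*c + 43*c^2 + 37*c^3 + 15*c^4 + 2*c^5)
  + 4*b^4*(41 + 228*c + 478*c^2 + 496*c^3 + 263*c^4 + 60*c^5 + 4*c^6)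
  + 8*b^3*(21 + 135*c + 326*c^2 + 392*c^3 + 248*c^4 + 74*c^5 + 8*c^6)
  + 4*b*(7 + 58*c + 176*c^2 + 270*c^3 + 228*c^4 + 96*c^5 + 16*c^6)
  + 4*b^2*(24 + 176*c + 479*c^2 + 652*c^3 + 478*c^4 + 172*c^5 + 24*c^6)

/-- Denominator polynomial of LeBrun's functional `A` on `CP² # 2 CP²-bar`. -/
noncomputable def D2 (b c : ℝ) : ℝ :=
  1 + 10*c + 36*c^2 + 64*c^3 + 60*c^4 + 24*c^5
  + 24*b^5*(1+c)^5
  + 12*b^4*(1+c)^2*(5 + 20*c + 23*c^2 + 10*c^3)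
  + 16*b^3*(4 + 28*c + 72*c^2 + 90*c^3 + 57*c^4 + 15*c^5)
  + 12*b^2*(3 + 24*c + 69*c^2 + 96*c^3 + 68*c^4 + 20*c^5)
  + 2*b*(5 + 45*c + 144*c^2 + 224*c^3 + 180*c^4 + 60*c^5)

/-- LeBrun's normalized Calabi-energy functional on the reduced Kähler cone
of `CP² # 2 CP²-bar`. -/
noncomputable def A2 (b c : ℝ) : ℝ := 3 * N2 b c / D2 b c

/-- Any critical point of `A2` in the open positive quadrant lies on the
diagonal `b = c`. -/

private lemma hpoly6 (a0 a1 a2 a3 a4 a5 a6 x : ℝ) :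
    HasDerivAt (fun t : ℝ => a0 + a1*t + a2*t^2 + a3*t^3 + a4*t^4 + a5*t^5 + a6*t^6)
      (a1 + 2*a2*x + 3*a3*x^2 + 4*a4*x^3 + 5*a5*x^4 + 6*a6*x^5) x := by
  have h : HasDerivAt (fun t : ℝ => a0 + a1*t + a2*t^2 + a3*t^3 + a4*t^4 + a5*t^5 + a6*t^6)
      (0 + a1*1 + a2*((2:ℕ)*x^1) + a3*((3:ℕ)*x^2) + a4*((4:ℕ)*x^3) + a5*((5:ℕ)*x^4)
        + a6*((6:ℕ)*x^5)) x :=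
    ((((((hasDerivAt_const x a0).add ((hasDerivAt_id x).const_mul a1)).add
      ((hasDerivAt_pow 2 x).const_mul a2)).add ((hasDerivAt_pow 3 x).const_mul a3)).add
      ((hasDerivAt_pow 4 x).const_mul a4)).add ((hasDerivAt_pow 5 x).const_mul a5)).add
      ((hasDerivAt_pow 6 x).const_mul a6)
  convert h using 1
  push_cast
  ring

set_option maxHeartbeats 4000000 in
set_option maxRecDepth 4000 in
theorem A2_critical_point_diagonal (b c : ℝ) (hb : 0 < b) (hc : 0 < c)
    (h1 : deriv (fun t => A2 t c) b = 0)
    (h2 : deriv (fun t => A2 b t) c = 0) :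
    b = c := by
  have hD : 0 < D2 b c := by unfold D2; positivity
  have hDne : D2 b c ≠ 0 := ne_of_gt hD
  have hNfun : (fun t : ℝ => N2 t c) = (fun t : ℝ => (3 + 28*c + 96*c^2 + 168*c^3 + 164*c^4 + 80*c^5 + 16*c^6) + (28 + 232*c + 704*c^2 + 1080*c^3 + 912*c^4 + 384*c^5 + 64*c^6)*t + (96 + 704*c + 1916*c^2 + 2608*c^3 + 1912*c^4 + 688*c^5 + 96*c^6)*t^2 + (168 + 1080*c + 2608*c^2 + 3136*c^3 + 1984*c^4 + 592*c^5 + 64*c^6)*t^3 + (164 + 912*c + 1912*c^2 + 1984*c^3 + 1052*c^4 + 240*c^5 + 16*c^6)*t^4 + (80 + 384*c + 688*c^2 + 592*c^3 + 240*c^4 + 32*c^5)*t^5 + (16 + 64*c + 96*c^2 + 64*c^3 + 16*c^4)*t^6) := by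
    funext t; simp only [N2]; ring
  have hDfun : (fun t : ℝ => D2 t c) = (fun t : ℝ => (1 + 10*c + 36*c^2 + 64*c^3 + 60*c^4 + 24*c^5) + (10 + 90*c + 288*c^2 + 448*c^3 + 360*c^4 + 120*c^5)*t + (36 + 288*c + 828*c^2 + 1152*c^3 + 816*c^4 + 240*c^5)*t^2 + (64 + 448*c + 1152*c^2 + 1440*c^3 + 912*c^4 + 240*c^5)*t^3 + (60 + 360*c + 816*c^2 + 912*c^3 + 516*c^4 + 120*c^5)*t^4 + (24 + 120*c + 240*c^2 + 240*c^3 + 120*c^4 + 24*c^5)*t^5 + (0)*t^6) := by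
    funext t; simp only [D2]; ring
  have hNfun2 : (fun t : ℝ => N2 b t) = (fun t : ℝ => (3 + 28*b + 96*b^2 + 168*b^3 + 164*b^4 + 80*b^5 + 16*b^6) + (28 + 232*b + 704*b^2 + 1080*b^3 + 912*b^4 + 384*b^5 + 64*b^6)*t + (96 + 704*b + 1916*b^2 + 2608*b^3 + 1912*b^4 + 688*b^5 + 96*b^6)*t^2 + (168 + 1080*b + 2608*b^2 + 3136*b^3 + 1984*b^4 + 592*b^5 + 64*b^6)*t^3 + (164 + 912*b + 1912*b^2 + 1984*b^3 + 1052*b^4 + 240*b^5 + 16*b^6)*t^4 + (80 + 384*b + 688*b^2 + 592*b^3 + 240*b^4 + 32*b^5)*t^5 + (16 + 64*b + 96*b^2 + 64*b^3 + 16*b^4)*t^6) := by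
    funext t; simp only [N2]; ring
  have hDfun2 : (fun t : ℝ => D2 b t) = (fun t : ℝ => (1 + 10*b + 36*b^2 + 64*b^3 + 60*b^4 + 24*b^5) + (10 + 90*b + 288*b^2 + 448*b^3 + 360*b^4 + 120*b^5)*t + (36 + 288*b + 828*b^2 + 1152*b^3 + 816*b^4 + 240*b^5)*t^2 + (64 + 448*b + 1152*b^2 + 1440*b^3 + 912*b^4 + 240*b^5)*t^3 + (60 + 360*b + 816*b^2 + 912*b^3 + 516*b^4 + 120*b^5)*t^4 + (24 + 120*b + 240*b^2 + 240*b^3 + 120*b^4 + 24*b^5)*t^5 + (0)*t^6) := by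
    funext t; simp only [D2]; ring
  have dN1 : HasDerivAt (fun t : ℝ => N2 t c) ((28 + 232*c + 704*c^2 + 1080*c^3 + 912*c^4 + 384*c^5 + 64*c^6) + 2*(96 + 704*c + 1916*c^2 + 2608*c^3 + 1912*c^4 + 688*c^5 + 96*c^6)*b + 3*(168 + 1080*c + 2608*c^2 + 3136*c^3 + 1984*c^4 + 592*c^5 + 64*c^6)*b^2 + 4*(164 + 912*c + 1912*c^2 + 1984*c^3 + 1052*c^4 + 240*c^5 + 16*c^6)*b^3 + 5*(80 + 384*c + 688*c^2 + 592*c^3 + 240*c^4 + 32*c^5)*b^4 + 6*(16 + 64*c + 96*c^2 + 64*c^3 + 16*c^4)*b^5) b := by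
    rw [hNfun]; exact hpoly6 (3 + 28*c + 96*c^2 + 168*c^3 + 164*c^4 + 80*c^5 + 16*c^6) (28 + 232*c + 704*c^2 + 1080*c^3 + 912*c^4 + 384*c^5 + 64*c^6) (96 + 704*c + 1916*c^2 + 2608*c^3 + 1912*c^4 + 688*c^5 + 96*c^6) (168 + 1080*c + 2608*c^2 + 3136*c^3 + 1984*c^4 + 592*c^5 + 64*c^6) (164 + 912*c + 1912*c^2 + 1984*c^3 + 1052*c^4 + 240*c^5 + 16*c^6) (80 + 384*c + 688*c^2 + 592*c^3 + 240*c^4 + 32*c^5) (16 + 64*c + 96*c^2 + 64*c^3 + 16*c^4) b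
  have dD1 : HasDerivAt (fun t : ℝ => D2 t c) ((10 + 90*c + 288*c^2 + 448*c^3 + 360*c^4 + 120*c^5) + 2*(36 + 288*c + 828*c^2 + 1152*c^3 + 816*c^4 + 240*c^5)*b + 3*(64 + 448*c + 1152*c^2 + 1440*c^3 + 912*c^4 + 240*c^5)*b^2 + 4*(60 + 360*c + 816*c^2 + 912*c^3 + 516*c^4 + 120*c^5)*b^3 + 5*(24 + 120*c + 240*c^2 + 240*c^3 + 120*c^4 + 24*c^5)*b^4 + 6*(0)*b^5) b := by
    rw [hDfun]; exact hpoly6 (1 + 10*c + 36*c^2 + 64*c^3 + 60*c^4 + 24*c^5) (10 + 90*c + 288*c^2 + 448*c^3 + 360*c^4 + 120*c^5) (36 + 288*c + 828*c^2 + 1152*c^3 + 816*c^4 + 240*c^5) (64 + 448*c + 1152*c^2 + 1440*c^3 + 912*c^4 + 240*c^5) (60 + 360*c + 816*c^2 + 912*c^3 + 516*c^4 + 120*c^5) (24 + 120*c + 240*c^2 + 240*c^3 + 120*c^4 + 24*c^5) (0) b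
  have dN2 : HasDerivAt (fun t : ℝ => N2 b t) ((28 + 232*b + 704*b^2 + 1080*b^3 + 912*b^4 + 384*b^5 + 64*b^6) + 2*(96 + 704*b + 1916*b^2 + 2608*b^3 + 1912*b^4 + 688*b^5 + 96*b^6)*c + 3*(168 + 1080*b + 2608*b^2 + 3136*b^3 + 1984*b^4 + 592*b^5 + 64*b^6)*c^2 + 4*(164 + 912*b + 1912*b^2 + 1984*b^3 + 1052*b^4 + 240*b^5 + 16*b^6)*c^3 + 5*(80 + 384*b + 688*b^2 + 592*b^3 + 240*b^4 + 32*b^5)*c^4 + 6*(16 + 64*b + 96*b^2 + 64*b^3 + 16*b^4)*c^5) c := by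
    rw [hNfun2]; exact hpoly6 (3 + 28*b + 96*b^2 + 168*b^3 + 164*b^4 + 80*b^5 + 16*b^6) (28 + 232*b + 704*b^2 + 1080*b^3 + 912*b^4 + 384*b^5 + 64*b^6) (96 + 704*b + 1916*b^2 + 2608*b^3 + 1912*b^4 + 688*b^5 + 96*b^6) (168 + 1080*b + 2608*b^2 + 3136*b^3 + 1984*b^4 + 592*b^5 + 64*b^6) (164 + 912*b + 1912*b^2 + 1984*b^3 + 1052*b^4 + 240*b^5 + 16*b^6) (80 + 384*b + 688*b^2 + 592*b^3 + 240*b^4 + 32*b^5) (16 + 64*b + 96*b^2 + 64*b^3 + 16*b^4) c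
  have dD2 : HasDerivAt (fun t : ℝ => D2 b t) ((10 + 90*b + 288*b^2 + 448*b^3 + 360*b^4 + 120*b^5) + 2*(36 + 288*b + 828*b^2 + 1152*b^3 + 816*b^4 + 240*b^5)*c + 3*(64 + 448*b + 1152*b^2 + 1440*b^3 + 912*b^4 + 240*b^5)*c^2 + 4*(60 + 360*b + 816*b^2 + 912*b^3 + 516*b^4 + 120*b^5)*c^3 + 5*(24 + 120*b + 240*b^2 + 240*b^3 + 120*b^4 + 24*b^5)*c^4 + 6*(0)*c^5) c := by
    rw [hDfun2]; exact hpoly6 (1 + 10*b + 36*b^2 + 64*b^3 + 60*b^4 + 24*b^5) (10 + 90*b + 288*b^2 + 448*b^3 + 360*b^4 + 120*b^5) (36 + 288*b + 828*b^2 + 1152*b^3 + 816*b^4 + 240*b^5) (64 + 448*b + 1152*b^2 + 1440*b^3 + 912*b^4 + 240*b^5) (60 + 360*b + 816*b^2 + 912*b^3 + 516*b^4 + 120*b^5) (24 + 120*b + 240*b^2 + 240*b^3 + 120*b^4 + 24*b^5) (0) c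
  have hA1 : HasDerivAt (fun t : ℝ => A2 t c)
      ((3 * ((28 + 232*c + 704*c^2 + 1080*c^3 + 912*c^4 + 384*c^5 + 64*c^6) + 2*(96 + 704*c + 1916*c^2 + 2608*c^3 + 1912*c^4 + 688*c^5 + 96*c^6)*b + 3*(168 + 1080*c + 2608*c^2 + 3136*c^3 + 1984*c^4 + 592*c^5 + 64*c^6)*b^2 + 4*(164 + 912*c + 1912*c^2 + 1984*c^3 + 1052*c^4 + 240*c^5 + 16*c^6)*b^3 + 5*(80 + 384*c + 688*c^2 + 592*c^3 + 240*c^4 + 32*c^5)*b^4 + 6*(16 + 64*c + 96*c^2 + 64*c^3 + 16*c^4)*b^5) * D2 b c - 3 * N2 b c * ((10 + 90*c + 288*c^2 + 448*c^3 + 360*c^4 + 120*c^5) + 2*(36 + 288*c + 828*c^2 + 1152*c^3 + 816*c^4 + 240*c^5)*b + 3*(64 + 448*c + 1152*c^2 + 1440*c^3 + 912*c^4 + 240*c^5)*b^2 + 4*(60 + 360*c + 816*c^2 + 912*c^3 + 516*c^4 + 120*c^5)*b^3 + 5*(24 + 120*c + 240*c^2 + 240*c^3 + 120*c^4 + 24*c^5)*b^4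 + 6*(0)*b^5)) / (D2 b c)^2) b := by
    have h := (dN1.const_mul 3).div dD1 hDne
    simpa only [A2, Pi.div_def] using h
  have hA2 : HasDerivAt (fun t : ℝ => A2 b t)
      ((3 * ((28 + 232*b + 704*b^2 + 1080*b^3 + 912*b^4 + 384*b^5 + 64*b^6) + 2*(96 + 704*b + 1916*b^2 + 2608*b^3 + 1912*b^4 + 688*b^5 + 96*b^6)*c + 3*(168 + 1080*b + 2608*b^2 + 3136*b^3 + 1984*b^4 + 592*b^5 + 64*b^6)*c^2 + 4*(164 + 912*b + 1912*b^2 + 1984*b^3 + 1052*b^4 + 240*b^5 + 16*b^6)*c^3 + 5*(80 + 384*b + 688*b^2 + 592*b^3 + 240*b^4 + 32*b^5)*c^4 + 6*(16 + 64*b + 96*b^2 + 64*b^3 + 16*b^4)*c^5) * D2 b c - 3 * N2 b c * ((10 + 90*b + 288*b^2 + 448*b^3 + 360*b^4 + 120*b^5) + 2*(36 + 288*b + 828*b^2 + 1152*b^3 + 816*b^4 + 240*b^5)*c + 3*(64 + 448*b + 1152*b^2 + 1440*b^3 + 912*b^4 + 240*b^5)*c^2 + 4*(60 + 360*b + 816*b^2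 + 912*b^3 + 516*b^4 + 120*b^5)*c^3 + 5*(24 + 120*b + 240*b^2 + 240*b^3 + 120*b^4 + 24*b^5)*c^4 + 6*(0)*c^5)) / (D2 b c)^2) c := by
    have h := (dN2.const_mul 3).div dD2 hDne
    simpa only [A2, Pi.div_def] using h
  rw [hA1.deriv] at h1
  rw [hA2.deriv] at h2
  have hD2ne : (D2 b c)^2 ≠ 0 := pow_ne_zero 2 hDne
  have e1 : 3 * ((28 + 232*c + 704*c^2 + 1080*c^3 + 912*c^4 + 384*c^5 + 64*c^6) + 2*(96 + 704*c + 1916*c^2 + 2608*c^3 + 1912*c^4 + 688*c^5 + 96*c^6)*b + 3*(168 + 1080*c + 2608*c^2 + 3136*c^3 + 1984*c^4 + 592*c^5 + 64*c^6)*b^2 + 4*(164 + 912*c + 1912*c^2 + 1984*c^3 + 1052*c^4 + 240*c^5 + 16*c^6)*b^3 + 5*(80 + 384*c + 688*c^2 + 592*c^3 + 240*c^4 + 32*c^5)*b^4 + 6*(16 + 64*c + 96*c^2 + 64*c^3 + 16*c^4)*b^5) * D2 b c - 3 * N2 b c * ((10 + 90*c + 288*c^2 + 448*c^3 + 360*c^4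 + 120*c^5) + 2*(36 + 288*c + 828*c^2 + 1152*c^3 + 816*c^4 + 240*c^5)*b + 3*(64 + 448*c + 1152*c^2 + 1440*c^3 + 912*c^4 + 240*c^5)*b^2 + 4*(60 + 360*c + 816*c^2 + 912*c^3 + 516*c^4 + 120*c^5)*b^3 + 5*(24 + 120*c + 240*c^2 + 240*c^3 + 120*c^4 + 24*c^5)*b^4 + 6*(0)*b^5) = 0 :=
    (div_eq_zero_iff.mp h1).resolve_right hD2ne
  have e2 : 3 * ((28 + 232*b + 704*b^2 + 1080*b^3 + 912*b^4 + 384*b^5 + 64*b^6) + 2*(96 + 704*b + 1916*b^2 + 2608*b^3 + 1912*b^4 + 688*b^5 + 96*b^6)*c + 3*(168 + 1080*b + 2608*b^2 + 3136*b^3 + 1984*b^4 + 592*b^5 + 64*b^6)*c^2 + 4*(164 + 912*b + 1912*b^2 + 1984*b^3 + 1052*b^4 + 240*b^5 + 16*b^6)*c^3 + 5*(80 + 384*b + 688*b^2 + 592*b^3 + 240*b^4 + 32*b^5)*c^4 + 6*(16 + 64*b + 96*b^2 + 64*b^3 + 16*b^4)*c^5) * D2 b c - 3 * N2 b c * ((10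 + 90*b + 288*b^2 + 448*b^3 + 360*b^4 + 120*b^5) + 2*(36 + 288*b + 828*b^2 + 1152*b^3 + 816*b^4 + 240*b^5)*c + 3*(64 + 448*b + 1152*b^2 + 1440*b^3 + 912*b^4 + 240*b^5)*c^2 + 4*(60 + 360*b + 816*b^2 + 912*b^3 + 516*b^4 + 120*b^5)*c^3 + 5*(24 + 120*b + 240*b^2 + 240*b^3 + 120*b^4 + 24*b^5)*c^4 + 6*(0)*c^5) = 0 :=
    (div_eq_zero_iff.mp h2).resolve_right hD2ne
  have key : 3 * ((b - c) * (14 + 192*c + 1176*c^2 + 4272*c^3 + 10256*c^4 + 17056*c^5 + 19904*c^6 + 16064*c^7 + 8544*c^8 + 2688*c^9 + 384*c^10 + 192*b + 2496*b*c + 14656*b*c^2 + 51248*b*c^3 + 118400*b*c^4 + 189056*b*c^5 + 211072*b*c^6 + 162112*b*c^7 + 81408*b*c^8 + 23808*b*c^9 + 3072*b*c^10 + 1176*b^2 + 14656*b^2*c + 82840*b^2*c^2 + 278640*b^2*c^3 + 617136*b^2*c^4 + 940096*b^2*c^5 + 995360*b^2*c^6 + 719936*b^2*c^7 + 337728*b^2*c^8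 + 91392*b^2*c^9 + 10752*b^2*c^10 + 4272*b^3 + 51248*b^3*c + 278640*b^3*c^2 + 898272*b^3*c^3 + 1896960*b^3*c^4 + 2738944*b^3*c^5 + 2730816*b^3*c^6 + 1846912*b^3*c^7 + 804096*b^3*c^8 + 200448*b^3*c^9 + 21504*b^3*c^10 + 10256*b^4 + 118400*b^4*c + 617136*b^4*c^2 + 1896960*b^4*c^3 + 3797280*b^4*c^4 + 5165408*b^4*c^5 + 4820928*b^4*c^6 + 3030848*b^4*c^7 + 1216896*b^4*c^8 + 277248*b^4*c^9 + 26880*b^4*c^10 + 17056*b^5 + 189056*b^5*c + 940096*b^5*c^2 + 2738944*b^5*c^3 + 5165408*b^5*c^4 + 6580288*b^5*c^5 + 5715072*b^5*c^6 + 3318592*b^5*c^7 + 1218432*b^5*c^8 + 250368*b^5*c^9 + 21504*b^5*c^10 + 19904*b^6 + 211072*b^6*c + 995360*b^6*c^2 + 2730816*b^6*c^3 + 4820928*b^6*c^4 + 5715072*b^6*c^5 + 4587680*b^6*c^6 + 2439744*b^6*c^7 + 808896*b^6*c^8 + 146688*b^6*c^9 + 10752*b^6*c^10 + 16064*b^7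 + 162112*b^7*c + 719936*b^7*c^2 + 1846912*b^7*c^3 + 3030848*b^7*c^4 + 3318592*b^7*c^5 + 2439744*b^7*c^6 + 1173120*b^7*c^7 + 344064*b^7*c^8 + 52992*b^7*c^9 + 3072*b^7*c^10 + 8544*b^8 + 81408*b^8*c + 337728*b^8*c^2 + 804096*b^8*c^3 + 1216896*b^8*c^4 + 1218432*b^8*c^5 + 808896*b^8*c^6 + 344064*b^8*c^7 + 85920*b^8*c^8 + 10368*b^8*c^9 + 384*b^8*c^10 + 2688*b^9 + 23808*b^9*c + 91392*b^9*c^2 + 200448*b^9*c^3 + 277248*b^9*c^4 + 250368*b^9*c^5 + 146688*b^9*c^6 + 52992*b^9*c^7 + 10368*b^9*c^8 + 768*b^9*c^9 + 384*b^10 + 3072*b^10*c + 10752*b^10*c^2 + 21504*b^10*c^3 + 26880*b^10*c^4 + 21504*b^10*c^5 + 10752*b^10*c^6 + 3072*b^10*c^7 + 384*b^10*c^8)) =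
      (3 * ((28 + 232*c + 704*c^2 + 1080*c^3 + 912*c^4 + 384*c^5 + 64*c^6) + 2*(96 + 704*c + 1916*c^2 + 2608*c^3 + 1912*c^4 + 688*c^5 + 96*c^6)*b + 3*(168 + 1080*c + 2608*c^2 + 3136*c^3 + 1984*c^4 + 592*c^5 + 64*c^6)*b^2 + 4*(164 + 912*c + 1912*c^2 + 1984*c^3 + 1052*c^4 + 240*c^5 + 16*c^6)*b^3 + 5*(80 + 384*c + 688*c^2 + 592*c^3 + 240*c^4 + 32*c^5)*b^4 + 6*(16 + 64*c + 96*c^2 + 64*c^3 + 16*c^4)*b^5) * D2 b c - 3 * N2 b c * ((10 + 90*c + 288*c^2 + 448*c^3 + 360*c^4 + 120*c^5) + 2*(36 + 288*c + 828*c^2 + 1152*c^3 + 816*c^4 + 240*c^5)*b + 3*(64 + 448*c + 1152*c^2 + 1440*c^3 + 912*c^4 + 240*c^5)*b^2 + 4*(60 + 360*c + 816*c^2 + 912*c^3 + 516*c^4 + 120*c^5)*b^3 + 5*(24 + 120*c + 240*c^2 + 240*c^3 + 120*c^4 + 24*c^5)*b^4 + 6*(0)*b^5))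
      - (3 * ((28 + 232*b + 704*b^2 + 1080*b^3 + 912*b^4 + 384*b^5 + 64*b^6) + 2*(96 + 704*b + 1916*b^2 + 2608*b^3 + 1912*b^4 + 688*b^5 + 96*b^6)*c + 3*(168 + 1080*b + 2608*b^2 + 3136*b^3 + 1984*b^4 + 592*b^5 + 64*b^6)*c^2 + 4*(164 + 912*b + 1912*b^2 + 1984*b^3 + 1052*b^4 + 240*b^5 + 16*b^6)*c^3 + 5*(80 + 384*b + 688*b^2 + 592*b^3 + 240*b^4 + 32*b^5)*c^4 + 6*(16 + 64*b + 96*b^2 + 64*b^3 + 16*b^4)*c^5) * D2 b c - 3 * N2 b c * ((10 + 90*b + 288*b^2 + 448*b^3 + 360*b^4 + 120*b^5) + 2*(36 + 288*b + 828*b^2 + 1152*b^3 + 816*b^4 + 240*b^5)*c + 3*(64 + 448*b + 1152*b^2 + 1440*b^3 + 912*b^4 + 240*b^5)*c^2 + 4*(60 + 360*b + 816*b^2 + 912*b^3 + 516*b^4 + 120*b^5)*c^3 + 5*(24 + 120*b + 240*b^2 + 240*b^3 + 120*b^4 + 24*b^5)*c^4 + 6*(0)*c^5)) := by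
    simp only [N2, D2]; ring
  have hQ : (0:ℝ) < (14 + 192*c + 1176*c^2 + 4272*c^3 + 10256*c^4 + 17056*c^5 + 19904*c^6 + 16064*c^7 + 8544*c^8 + 2688*c^9 + 384*c^10 + 192*b + 2496*b*c + 14656*b*c^2 + 51248*b*c^3 + 118400*b*c^4 + 189056*b*c^5 + 211072*b*c^6 + 162112*b*c^7 + 81408*b*c^8 + 23808*b*c^9 + 3072*b*c^10 + 1176*b^2 + 14656*b^2*c + 82840*b^2*c^2 + 278640*b^2*c^3 + 617136*b^2*c^4 + 940096*b^2*c^5 + 995360*b^2*c^6 + 719936*b^2*c^7 + 337728*b^2*c^8 + 91392*b^2*c^9 + 10752*b^2*c^10 + 4272*b^3 + 51248*b^3*c + 278640*b^3*c^2 + 898272*b^3*c^3 + 1896960*b^3*c^4 + 2738944*b^3*c^5 + 2730816*b^3*c^6 + 1846912*b^3*c^7 + 804096*b^3*c^8 + 200448*b^3*c^9 + 21504*b^3*c^10 + 10256*b^4 + 118400*b^4*c + 617136*b^4*c^2 + 1896960*b^4*c^3 + 3797280*b^4*c^4 + 5165408*b^4*c^5 + 4820928*b^4*c^6 + 3030848*b^4*c^7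 + 1216896*b^4*c^8 + 277248*b^4*c^9 + 26880*b^4*c^10 + 17056*b^5 + 189056*b^5*c + 940096*b^5*c^2 + 2738944*b^5*c^3 + 5165408*b^5*c^4 + 6580288*b^5*c^5 + 5715072*b^5*c^6 + 3318592*b^5*c^7 + 1218432*b^5*c^8 + 250368*b^5*c^9 + 21504*b^5*c^10 + 19904*b^6 + 211072*b^6*c + 995360*b^6*c^2 + 2730816*b^6*c^3 + 4820928*b^6*c^4 + 5715072*b^6*c^5 + 4587680*b^6*c^6 + 2439744*b^6*c^7 + 808896*b^6*c^8 + 146688*b^6*c^9 + 10752*b^6*c^10 + 16064*b^7 + 162112*b^7*c + 719936*b^7*c^2 + 1846912*b^7*c^3 + 3030848*b^7*c^4 + 3318592*b^7*c^5 + 2439744*b^7*c^6 + 1173120*b^7*c^7 + 344064*b^7*c^8 + 52992*b^7*c^9 + 3072*b^7*c^10 + 8544*b^8 + 81408*b^8*c + 337728*b^8*c^2 + 804096*b^8*c^3 + 1216896*b^8*c^4 + 1218432*b^8*c^5 + 808896*b^8*c^6 + 344064*b^8*c^7 + 85920*b^8*c^8 + 10368*b^8*c^9 + 384*b^8*c^10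 + 2688*b^9 + 23808*b^9*c + 91392*b^9*c^2 + 200448*b^9*c^3 + 277248*b^9*c^4 + 250368*b^9*c^5 + 146688*b^9*c^6 + 52992*b^9*c^7 + 10368*b^9*c^8 + 768*b^9*c^9 + 384*b^10 + 3072*b^10*c + 10752*b^10*c^2 + 21504*b^10*c^3 + 26880*b^10*c^4 + 21504*b^10*c^5 + 10752*b^10*c^6 + 3072*b^10*c^7 + 384*b^10*c^8) := by positivity
  rw [e1, e2] at key
  have hz : (b - c) * (14 + 192*c + 1176*c^2 + 4272*c^3 + 10256*c^4 + 17056*c^5 + 19904*c^6 + 16064*c^7 + 8544*c^8 + 2688*c^9 + 384*c^10 + 192*b + 2496*b*c + 14656*b*c^2 + 51248*b*c^3 + 118400*b*c^4 + 189056*b*c^5 + 211072*b*c^6 + 162112*b*c^7 + 81408*b*c^8 + 23808*b*c^9 + 3072*b*c^10 + 1176*b^2 + 14656*b^2*c + 82840*b^2*c^2 + 278640*b^2*c^3 + 617136*b^2*c^4 + 940096*b^2*c^5 + 995360*b^2*c^6 + 719936*b^2*c^7 + 337728*b^2*c^8 + 91392*b^2*c^9 + 10752*b^2*c^10 + 4272*b^3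 + 51248*b^3*c + 278640*b^3*c^2 + 898272*b^3*c^3 + 1896960*b^3*c^4 + 2738944*b^3*c^5 + 2730816*b^3*c^6 + 1846912*b^3*c^7 + 804096*b^3*c^8 + 200448*b^3*c^9 + 21504*b^3*c^10 + 10256*b^4 + 118400*b^4*c + 617136*b^4*c^2 + 1896960*b^4*c^3 + 3797280*b^4*c^4 + 5165408*b^4*c^5 + 4820928*b^4*c^6 + 3030848*b^4*c^7 + 1216896*b^4*c^8 + 277248*b^4*c^9 + 26880*b^4*c^10 + 17056*b^5 + 189056*b^5*c + 940096*b^5*c^2 + 2738944*b^5*c^3 + 5165408*b^5*c^4 + 6580288*b^5*c^5 + 5715072*b^5*c^6 + 3318592*b^5*c^7 + 1218432*b^5*c^8 + 250368*b^5*c^9 + 21504*b^5*c^10 + 19904*b^6 + 211072*b^6*c + 995360*b^6*c^2 + 2730816*b^6*c^3 + 4820928*b^6*c^4 + 5715072*b^6*c^5 + 4587680*b^6*c^6 + 2439744*b^6*c^7 + 808896*b^6*c^8 + 146688*b^6*c^9 + 10752*b^6*c^10 + 16064*b^7 + 162112*b^7*c + 719936*b^7*c^2 + 1846912*b^7*c^3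 + 3030848*b^7*c^4 + 3318592*b^7*c^5 + 2439744*b^7*c^6 + 1173120*b^7*c^7 + 344064*b^7*c^8 + 52992*b^7*c^9 + 3072*b^7*c^10 + 8544*b^8 + 81408*b^8*c + 337728*b^8*c^2 + 804096*b^8*c^3 + 1216896*b^8*c^4 + 1218432*b^8*c^5 + 808896*b^8*c^6 + 344064*b^8*c^7 + 85920*b^8*c^8 + 10368*b^8*c^9 + 384*b^8*c^10 + 2688*b^9 + 23808*b^9*c + 91392*b^9*c^2 + 200448*b^9*c^3 + 277248*b^9*c^4 + 250368*b^9*c^5 + 146688*b^9*c^6 + 52992*b^9*c^7 + 10368*b^9*c^8 + 768*b^9*c^9 + 384*b^10 + 3072*b^10*c + 10752*b^10*c^2 + 21504*b^10*c^3 + 26880*b^10*c^4 + 21504*b^10*c^5 + 10752*b^10*c^6 + 3072*b^10*c^7 + 384*b^10*c^8) = 0 := by linarith [key]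
  rcases mul_eq_zero.mp hz with h | h
  · linarith
  · exact absurd h (ne_of_gt hQ)
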